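/- The equation x^3 + y^3 = 1729 has infinitely many rational solutions; that is, the set of pairs (x, y) of rational numbers with x^3 + y^3 = 1729 is infinite. -/

import Mathlib

/-! The tangent line to the cubic `x³ + y³ = A` at `(x, y)` meets it again at
`(x (x³ + 2y³) / (x³ - y³), -y (2x³ + y³) / (x³ - y³))`. If `A` is a `2`-adic integer
and `|x|₂ ≥ 2`, then `x³ + 2y³ = 2A - x³` has `2`-adic norm `|x|₂³` and `x³ - y³ = 2x³ - A`
has norm `|x|₂³ / 2`, so this map doubles `|x|₂`. Iterating it from one point with `|x|₂ ≥ 2`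
therefore never repeats a point, and `(-397/26, 453/26)` is such a point on `x³ + y³ = 1729`. -/

open IsAbsoluteValue

namespace CubeSum

def tangentStep {K : Type*} [Field K] (p : K × K) : K × K :=
  (p.1 * (p.1 ^ 3 + 2 * p.2 ^ 3) / (p.1 ^ 3 - p.2 ^ 3),
    -p.2 * (2 * p.1 ^ 3 + p.2 ^ 3) / (p.1 ^ 3 - p.2 ^ 3))

theorem tangentStep_cube_add_cube {K : Type*} [Field K] {p : K × K} (h : p.1 ^ 3 ≠ p.2 ^ 3) :
    (tangentStep p).1 ^ 3 + (tangentStep p).2 ^ 3 = p.1 ^ 3 + p.2 ^ 3 := by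
  have hd : p.1 ^ 3 - p.2 ^ 3 ≠ 0 := sub_ne_zero.mpr h
  simp only [tangentStep]
  field_simp
  ring

theorem padicNorm_sub_of_lt {p : ℕ} [Fact p.Prime] {q r : ℚ}
    (h : padicNorm p r < padicNorm p q) : padicNorm p (q - r) = padicNorm p q := by
  rw [sub_eq_add_neg, padicNorm.add_eq_max_of_ne (by rw [padicNorm.neg]; exact h.ne'),
    padicNorm.neg, max_eq_left h.le]

section TwoAdic

variable {x y : ℚ}

theorem padicNorm_two_mul_self : padicNorm 2 (2 * x) = padicNorm 2 x / 2 := by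
  rw [padicNorm.mul, show padicNorm 2 (2 : ℚ) = 2⁻¹ by
    exact_mod_cast padicNorm.padicNorm_p_of_prime (p := 2)]
  ring

theorem padicNorm_cube_sub_cube (hA : padicNorm 2 (x ^ 3 + y ^ 3) ≤ 1)
    (hx : 2 ≤ padicNorm 2 x) : padicNorm 2 (x ^ 3 - y ^ 3) = padicNorm 2 x ^ 3 / 2 := by
  have hx3 : 8 ≤ padicNorm 2 x ^ 3 := by nlinarith [pow_le_pow_left₀ zero_le_two hx 3]
  calc padicNorm 2 (x ^ 3 - y ^ 3) = padicNorm 2 (2 * x ^ 3 - (x ^ 3 + y ^ 3)) := by ring_nf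
    _ = padicNorm 2 x ^ 3 / 2 := by
      rw [padicNorm_sub_of_lt] <;> rw [padicNorm_two_mul_self, abv_pow (padicNorm 2)]
      linarith

theorem padicNorm_cube_add_two_mul_cube (hA : padicNorm 2 (x ^ 3 + y ^ 3) ≤ 1)
    (hx : 2 ≤ padicNorm 2 x) : padicNorm 2 (x ^ 3 + 2 * y ^ 3) = padicNorm 2 x ^ 3 := by
  have hx3 : 8 ≤ padicNorm 2 x ^ 3 := by nlinarith [pow_le_pow_left₀ zero_le_two hx 3]
  calc padicNorm 2 (x ^ 3 + 2 * y ^ 3) = padicNorm 2 (x ^ 3 - 2 * (x ^ 3 + y ^ 3)) := by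
        rw [← padicNorm.neg]; ring_nf
    _ = padicNorm 2 x ^ 3 := by
      rw [padicNorm_sub_of_lt] <;> rw [abv_pow (padicNorm 2)]
      rw [padicNorm_two_mul_self]
      linarith

theorem padicNorm_tangentStep_fst (hA : padicNorm 2 (x ^ 3 + y ^ 3) ≤ 1)
    (hx : 2 ≤ padicNorm 2 x) : padicNorm 2 (tangentStep (x, y)).1 = 2 * padicNorm 2 x := by
  have hx0 : padicNorm 2 x ≠ 0 := by positivity
  simp only [tangentStep]
  rw [padicNorm.div, padicNorm.mul, padicNorm_cube_add_two_mul_cube hA hx,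
    padicNorm_cube_sub_cube hA hx]
  field_simp

end TwoAdic

theorem iterate_tangentStep {A : ℚ} (hA : padicNorm 2 A ≤ 1) {p : ℚ × ℚ}
    (hp : p.1 ^ 3 + p.2 ^ 3 = A) (hx : 2 ≤ padicNorm 2 p.1) (n : ℕ) :
    (tangentStep^[n] p).1 ^ 3 + (tangentStep^[n] p).2 ^ 3 = A ∧
      padicNorm 2 (tangentStep^[n] p).1 = 2 ^ n * padicNorm 2 p.1 := by
  induction n with
  | zero => simp [hp]
  | succ n ih =>
    obtain ⟨hq, hqx⟩ := ih
    set q := tangentStep^[n] p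
    have hqA : padicNorm 2 (q.1 ^ 3 + q.2 ^ 3) ≤ 1 := hq ▸ hA
    have hq2 : 2 ≤ padicNorm 2 q.1 := by
      rw [hqx]; nlinarith [one_le_pow₀ (M₀ := ℚ) one_le_two (n := n)]
    have hne : q.1 ^ 3 ≠ q.2 ^ 3 := by
      intro h
      have h0 := padicNorm_cube_sub_cube hqA hq2
      rw [h, sub_self, padicNorm.zero] at h0
      nlinarith [pow_le_pow_left₀ zero_le_two hq2 3]
    rw [Function.iterate_succ_apply']
    refine ⟨(tangentStep_cube_add_cube hne).trans hq, ?_⟩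
    rw [padicNorm_tangentStep_fst hqA hq2, hqx, pow_succ]
    ring

theorem infinite_cube_add_cube_eq {A : ℚ} (hA : padicNorm 2 A ≤ 1) {p : ℚ × ℚ}
    (hp : p.1 ^ 3 + p.2 ^ 3 = A) (hx : 2 ≤ padicNorm 2 p.1) :
    {q : ℚ × ℚ | q.1 ^ 3 + q.2 ^ 3 = A}.Infinite := by
  refine Set.infinite_of_injective_forall_mem (f := fun n ↦ tangentStep^[n] p) ?_
    fun n ↦ (iterate_tangentStep hA hp hx n).1
  intro m n hmn
  have hnorm := congrArg (padicNorm 2 ∘ Prod.fst) hmn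
  simp only [Function.comp_apply, (iterate_tangentStep hA hp hx _).2] at hnorm
  exact Nat.pow_right_injective le_rfl (by exact_mod_cast mul_right_cancel₀ (by positivity) hnorm)

end CubeSum

theorem padicNorm_two_neg_397_div_26 : padicNorm 2 (-397 / 26 : ℚ) = 2 := by
  have hodd (m : ℕ) (hm : ¬ 2 ∣ m) : padicNorm 2 (m : ℚ) = 1 :=
    (padicNorm.nat_eq_one_iff m).mpr hm
  rw [show (-397 / 26 : ℚ) = -((397 : ℕ) / (2 * (13 : ℕ))) by norm_num, padicNorm.neg,
    padicNorm.div, CubeSum.padicNorm_two_mul_self, hodd 397 (by decide),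
    hodd 13 (by decide)]
  norm_num

theorem infinitely_many_rational_solutions_1729 :
    {p : ℚ × ℚ | p.1 ^ 3 + p.2 ^ 3 = 1729}.Infinite := by
  have h1729 : padicNorm 2 (1729 : ℚ) ≤ 1 := by exact_mod_cast padicNorm.of_nat 1729
  -- the third intersection of the curve with the chord through `(1, 12)` and `(10, 9)`
  exact CubeSum.infinite_cube_add_cube_eq (p := (-397 / 26, 453 / 26)) h1729 (by norm_num)
    padicNorm_two_neg_397_div_26.ge
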